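/- Let U be a d×d unitary matrix, let D_{B'}(X) = ∑_i (U P_i U†) X (U P_i U†) be the dephasing superoperator of the rotated basis, and let X_U be the d×d real matrix with entries (X_U)_{ij} = |⟨i|U|j⟩|². Then ∑_{i=1}^d ( ⟨D_{B'}(P_i), D_{B'}(P_i)⟩ − ⟨D_B(D_{B'}(P_i)), D_B(D_{B'}(P_i))⟩ ) = Tr[ X_U X_Uᵀ ( I − X_U X_Uᵀ ) ]; in particular, the 2-norm coherence generating power of the maximally dephasing channel D_{B'} with respect to B equals (1/(d(d+1))) · Tr[ X_U X_Uᵀ ( I − X_U X_Uᵀ ) ]. -/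

import Mathlib

open Matrix BigOperators

/-- The rank-one projector `|v i⟩⟨v i|`. -/
noncomputable def rankOneProj {d : ℕ} (v : Fin d → (Fin d → ℂ)) (i : Fin d) :
    Matrix (Fin d) (Fin d) ℂ :=
  Matrix.vecMulVec (v i) (star (v i))

/-- The dephasing superoperator `D_B(X) = ∑ i, P_i X P_i`, `P_i = |v i⟩⟨v i|`. -/
noncomputable def dephase {d : ℕ} (v : Fin d → (Fin d → ℂ))
    (X : Matrix (Fin d) (Fin d) ℂ) : Matrix (Fin d) (Fin d) ℂ :=
  ∑ i, rankOneProj v i * X * rankOneProj v i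

/-- The dephasing superoperator of the rotated basis `B' = {U (v i)}`:
`D_{B'}(X) = ∑ i, (U P_i Uᴴ) X (U P_i Uᴴ)`. -/
noncomputable def dephaseRot {d : ℕ} (v : Fin d → (Fin d → ℂ))
    (U : Matrix (Fin d) (Fin d) ℂ) (X : Matrix (Fin d) (Fin d) ℂ) :
    Matrix (Fin d) (Fin d) ℂ :=
  ∑ i, (U * rankOneProj v i * Uᴴ) * X * (U * rankOneProj v i * Uᴴ)

/-- The bistochastic matrix `(X_U)_{ij} = |⟨i|U|j⟩|²` of a unitary `U`, with respect to an
orthonormal basis `{v i}`. -/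
noncomputable def xMat {d : ℕ} (v : Fin d → (Fin d → ℂ)) (U : Matrix (Fin d) (Fin d) ℂ) :
    Matrix (Fin d) (Fin d) ℝ :=
  Matrix.of fun i j => ‖star (v i) ⬝ᵥ (U *ᵥ v j)‖ ^ 2

/-!
Conjugation by `U` turns `D_{B'}` into the dephasing in the orthonormal basis `w j = U v j`, and
a dephasing replaces a matrix by its diagonal in its basis. Hence
`D_{B'}(P_i) = ∑ j, (X_U)_{ij} |w j⟩⟨w j|` and `D_B(D_{B'}(P_i)) = ∑ k, (X_U X_Uᵀ)_{ik} P_k`,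
while `‖∑ j, c_j P_j‖₂² = ∑ j, c_j²` for orthonormal projectors. Summing over `i` gives
`Tr(X_U X_Uᵀ) - Tr((X_U X_Uᵀ)²)`.
-/

section RankOne

variable {n : Type*} [Fintype n]

lemma vecMulVec_mul_mul_vecMulVec {R : Type*} [CommSemiring R] (u w : n → R)
    (A : Matrix n n R) :
    vecMulVec u w * A * vecMulVec u w = (w ⬝ᵥ A *ᵥ u) • vecMulVec u w := by
  rw [vecMulVec_mul, vecMulVec_mul_vecMulVec, vecMulVec_smul, dotProduct_mulVec]

lemma star_mulVec_dotProduct_mulVec_of_unitary {R : Type*} [CommRing R] [StarRing R]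
    [DecidableEq n] {U : Matrix n n R} (hU : U ∈ unitaryGroup n R) (x y : n → R) :
    star (U *ᵥ x) ⬝ᵥ U *ᵥ y = star x ⬝ᵥ y := by
  rw [star_mulVec, dotProduct_mulVec, vecMul_vecMul, ← star_eq_conjTranspose,
    mem_unitaryGroup_iff'.mp hU, vecMul_one]

variable {𝕜 : Type*} [RCLike 𝕜]

lemma star_dotProduct_vecMulVec_star_mulVec (u x : n → 𝕜) :
    star x ⬝ᵥ vecMulVec u (star u) *ᵥ x = ((‖star u ⬝ᵥ x‖ ^ 2 : ℝ) : 𝕜) := by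
  rw [vecMulVec_mulVec, dotProduct_comm, op_smul_eq_smul, smul_dotProduct, smul_eq_mul,
    dotProduct_comm u, star_dotProduct x u]
  push_cast
  exact RCLike.mul_conj _

lemma norm_star_dotProduct_comm (x y : n → 𝕜) : ‖star x ⬝ᵥ y‖ = ‖star y ⬝ᵥ x‖ := by
  rw [star_dotProduct, norm_star]

end RankOne

section Dephasing

variable {d : ℕ}

lemma conjTranspose_rankOneProj (v : Fin d → (Fin d → ℂ)) (i : Fin d) :
    (rankOneProj v i)ᴴ = rankOneProj v i := by
  rw [rankOneProj, conjTranspose_vecMulVec, star_star]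

lemma mul_rankOneProj_mul_conjTranspose (v : Fin d → (Fin d → ℂ))
    (U : Matrix (Fin d) (Fin d) ℂ) (i : Fin d) :
    U * rankOneProj v i * Uᴴ = rankOneProj (fun j => U *ᵥ v j) i := by
  rw [rankOneProj, rankOneProj, mul_vecMulVec, vecMulVec_mul, star_mulVec]

lemma dephaseRot_eq_dephase (v : Fin d → (Fin d → ℂ)) (U : Matrix (Fin d) (Fin d) ℂ) :
    dephaseRot v U = dephase (fun j => U *ᵥ v j) := by
  funext X
  simp only [dephaseRot, dephase, mul_rankOneProj_mul_conjTranspose]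

lemma dephase_eq_sum_smul_rankOneProj (v : Fin d → (Fin d → ℂ))
    (A : Matrix (Fin d) (Fin d) ℂ) :
    dephase v A = ∑ k, (star (v k) ⬝ᵥ A *ᵥ v k) • rankOneProj v k :=
  Finset.sum_congr rfl fun k _ => vecMulVec_mul_mul_vecMulVec (v k) (star (v k)) A

lemma dephase_rankOneProj (v w : Fin d → (Fin d → ℂ)) (i : Fin d) :
    dephase w (rankOneProj v i)
      = ∑ j, ((‖star (v i) ⬝ᵥ w j‖ ^ 2 : ℝ) : ℂ) • rankOneProj w j := by
  rw [dephase_eq_sum_smul_rankOneProj]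
  simp only [rankOneProj, star_dotProduct_vecMulVec_star_mulVec]
  rfl

lemma dephase_sum_smul_rankOneProj (v w : Fin d → (Fin d → ℂ)) (c : Fin d → ℝ) :
    dephase v (∑ j, (c j : ℂ) • rankOneProj w j)
      = ∑ k, ((∑ j, c j * ‖star (w j) ⬝ᵥ v k‖ ^ 2 : ℝ) : ℂ) • rankOneProj v k := by
  rw [dephase_eq_sum_smul_rankOneProj]
  simp only [sum_mulVec, dotProduct_sum, smul_mulVec, dotProduct_smul, rankOneProj,
    star_dotProduct_vecMulVec_star_mulVec, smul_eq_mul]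
  push_cast
  rfl

variable {v : Fin d → (Fin d → ℂ)} (hv : ∀ i j, star (v i) ⬝ᵥ v j = if i = j then 1 else 0)
include hv

lemma trace_rankOneProj (i : Fin d) : (rankOneProj v i).trace = 1 := by
  rw [rankOneProj, trace_vecMulVec, dotProduct_comm, hv, if_pos rfl]

lemma rankOneProj_mul_rankOneProj (i j : Fin d) :
    rankOneProj v i * rankOneProj v j = if i = j then rankOneProj v i else 0 := by
  rw [rankOneProj, rankOneProj, vecMulVec_mul_vecMulVec, hv]
  split_ifs with h
  · rw [one_smul, h]
  · rw [zero_smul, vecMulVec_zero]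

lemma sum_smul_rankOneProj_mul_sum_smul_rankOneProj (a b : Fin d → ℂ) :
    (∑ i, a i • rankOneProj v i) * ∑ j, b j • rankOneProj v j
      = ∑ i, (a i * b i) • rankOneProj v i := by
  simp only [Finset.sum_mul_sum, smul_mul_smul_comm, rankOneProj_mul_rankOneProj hv,
    smul_ite, smul_zero, Finset.sum_ite_eq, Finset.mem_univ, if_true]

lemma trace_conjTranspose_mul_self_sum_smul_rankOneProj (c : Fin d → ℝ) :
    ((∑ j, (c j : ℂ) • rankOneProj v j)ᴴ * ∑ j, (c j : ℂ) • rankOneProj v j).trace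
      = ((∑ j, c j ^ 2 : ℝ) : ℂ) := by
  simp only [conjTranspose_sum, conjTranspose_smul, Complex.star_def, Complex.conj_ofReal,
    conjTranspose_rankOneProj, sum_smul_rankOneProj_mul_sum_smul_rankOneProj hv, trace_sum,
    trace_smul, trace_rankOneProj hv, smul_eq_mul, mul_one]
  push_cast
  simp only [sq]

end Dephasing

lemma trace_mul_one_sub_self_of_isSymm {n R : Type*} [Fintype n] [DecidableEq n] [CommRing R]
    {M : Matrix n n R} (hM : M.IsSymm) :
    (M * (1 - M)).trace = ∑ i, (M i i - ∑ k, M i k ^ 2) := by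
  rw [mul_sub, mul_one, trace_sub, Finset.sum_sub_distrib]
  congr 1
  simp only [trace, diag, mul_apply, sq, hM.apply]

/-- **2-norm CGP of a maximally dephasing channel.**
For an orthonormal basis `B = {v i}` of `ℂ^d` and a unitary `U` (rotated basis `B'`),
`∑ i (⟨D_{B'} P_i, D_{B'} P_i⟩ − ⟨D_B D_{B'} P_i, D_B D_{B'} P_i⟩)
  = Tr[X_U X_Uᵀ (I − X_U X_Uᵀ)]`,
so that the 2-norm coherence generating power of `D_{B'}` with respect to `B` equals
`Tr[X_U X_Uᵀ (I − X_U X_Uᵀ)] / (d(d+1))`. -/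
theorem cgp_maximal_dephasing {d : ℕ}
    (v : Fin d → (Fin d → ℂ))
    (hv : ∀ i j, star (v i) ⬝ᵥ v j = if i = j then 1 else 0)
    (U : Matrix (Fin d) (Fin d) ℂ) (hU : U ∈ Matrix.unitaryGroup (Fin d) ℂ) :
    ∑ i, (((dephaseRot v U (rankOneProj v i))ᴴ * dephaseRot v U (rankOneProj v i)).trace
        - ((dephase v (dephaseRot v U (rankOneProj v i)))ᴴ *
            dephase v (dephaseRot v U (rankOneProj v i))).trace)
      = (((xMat v U * (xMat v U)ᵀ * (1 - xMat v U * (xMat v U)ᵀ)).trace : ℝ) : ℂ) := by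
  set X := xMat v U
  set w : Fin d → (Fin d → ℂ) := fun j => U *ᵥ v j
  have hw : ∀ i j, star (w i) ⬝ᵥ w j = if i = j then 1 else 0 := fun i j => by
    rw [star_mulVec_dotProduct_mulVec_of_unitary hU, hv]
  have hrot : ∀ i, dephaseRot v U (rankOneProj v i) = ∑ j, (X i j : ℂ) • rankOneProj w j :=
    fun i => by rw [dephaseRot_eq_dephase, dephase_rankOneProj]; rfl
  have hdeph : ∀ i, dephase v (dephaseRot v U (rankOneProj v i))
      = ∑ k, ((X * Xᵀ) i k : ℂ) • rankOneProj v k := fun i => by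
    simp only [hrot, dephase_sum_smul_rankOneProj, norm_star_dotProduct_comm (w _), mul_apply,
      transpose_apply]
    rfl
  rw [trace_mul_one_sub_self_of_isSymm (isSymm_mul_transpose_self X), Complex.ofReal_sum]
  refine Finset.sum_congr rfl fun i _ => ?_
  rw [hdeph, hrot, trace_conjTranspose_mul_self_sum_smul_rankOneProj hw,
    trace_conjTranspose_mul_self_sum_smul_rankOneProj hv, mul_apply]
  simp only [transpose_apply, sq]
  push_cast
  rfl
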